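/- arXiv:2106.13877 — 4 statements merged into one kernel-verified Lean document; each statement's English description precedes it below -/
import Mathlib

section
/- Let H be a real inner product space, a : H × H → ℝ a symmetric bilinear form with a(v,v) ≥ 0 for all v ∈ H, and define E(v) := (1/2)·a(v,v). Let τ > 0, N ≥ 1, and let y⁰, y¹, …, y^N ∈ H be such that for each n = 0, …, N−1 the increment δ^{n+1} := y^{n+1} − y^n satisfies τ⁻¹·⟨δ^{n+1}, δ^{n+1}⟩ + a(y^{n+1}, δ^{n+1}) = 0. Then τ⁻¹ · Σ_{n=0}^{N−1} ‖δ^{n+1}‖² + E(y^N) ≤ E(y⁰). -/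
open scoped RealInnerProductSpace

/-- Telescoped energy decay (5.6) for the discrete H²-gradient flow:
summing the one-step energy decays over `n = 0, …, N-1`. -/
theorem stmt_1 {H : Type*} [NormedAddCommGroup H] [InnerProductSpace ℝ H]
    (a : H →ₗ[ℝ] H →ₗ[ℝ] ℝ)
    (hsymm : ∀ v w : H, a v w = a w v)
    (hpos : ∀ v : H, 0 ≤ a v v)
    (E : H → ℝ) (hE : ∀ v, E v = (1 / 2) * a v v)
    (τ : ℝ) (hτ : 0 < τ) (N : ℕ) (hN : 1 ≤ N) (y : ℕ → H)
    (hstep : ∀ n < N,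
      τ⁻¹ * ⟪y (n + 1) - y n, y (n + 1) - y n⟫ + a (y (n + 1)) (y (n + 1) - y n) = 0) :
    τ⁻¹ * ∑ n ∈ Finset.range N, ‖y (n + 1) - y n‖ ^ 2 + E (y N) ≤ E (y 0) := by
  have key : ∀ n < N, τ⁻¹ * ‖y (n + 1) - y n‖ ^ 2 + E (y (n + 1)) ≤ E (y n) := by
    intro n hn
    have h := hstep n hn
    rw [real_inner_self_eq_norm_sq] at h
    set u := y (n + 1)
    set v := y n
    have hexp : a (u - v) (u - v) = a u u - a u v - a u v + a v v := by
      have hs := hsymm v u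
      simp [map_sub]
      linarith
    have hpδ := hpos (u - v)
    have hau : a u (u - v) = a u u - a u v := by simp [map_sub]
    rw [hE u, hE v]
    nlinarith [sq_nonneg ‖u - v‖, hτ]
  have main : ∀ M ≤ N,
      τ⁻¹ * ∑ n ∈ Finset.range M, ‖y (n + 1) - y n‖ ^ 2 + E (y M) ≤ E (y 0) := by
    intro M hM
    induction M with
    | zero => simp
    | succ M ih =>
      have ih' := ih (le_of_lt hM)
      have hk := key M hM
      rw [Finset.sum_range_succ, mul_add]
      linarith
  exact main N le_rfl
end

section
/- Let (Ω, μ) be a measure space and let 𝒯 be a finite collection of pairwise disjoint measurable subsets of Ω whose union is Ω. Let g : Ω → ℝ^{2×2} be measurable with integrable entries, let N ≥ 1, and let G⁰, G¹, …, G^N : Ω → ℝ^{3×2} be measurable with square-integrable entries. Set δ^{n+1} := G^{n+1} − G^n and assume the linearized metric constraint: for every n = 0, …, N−1 and every T ∈ 𝒯, ∫_T ((δ^{n+1})ᵀ G^n + (G^n)ᵀ δ^{n+1}) dμ = 0 (the zero 2×2 matrix). Then Σ_{T ∈ 𝒯} ‖∫_T ((G^N)ᵀ G^N − g) dμ‖_F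 ≤ Σ_{T ∈ 𝒯} ‖∫_T ((G⁰)ᵀ G⁰ − g) dμ‖_F + Σ_{n=0}^{N−1} ∫_Ω ‖δ^{n+1}‖_F² dμ. -/
/-!
Expanding `(Gⁿ⁺¹)ᵀGⁿ⁺¹ = (Gⁿ)ᵀGⁿ + ((δⁿ⁺¹)ᵀGⁿ + (Gⁿ)ᵀδⁿ⁺¹) + (δⁿ⁺¹)ᵀδⁿ⁺¹`, the middle term
integrates to zero over every cell by the linearized constraint. So on each cell the defect
changes by `∫_T (δⁿ⁺¹)ᵀδⁿ⁺¹`, whose Frobenius norm is at most `∫_T ‖δⁿ⁺¹‖_F²` by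
Minkowski and submultiplicativity of the Frobenius norm. Summing over the cells and telescoping
in `n` gives the bound.
-/

open MeasureTheory Matrix

/-- The square of the Frobenius norm of a real matrix. -/
noncomputable def frobNormSq {m n : Type*} [Fintype m] [Fintype n]
    (A : Matrix m n ℝ) : ℝ :=
  ∑ i, ∑ j, (A i j) ^ 2

/-- The Frobenius norm of a real matrix. -/
noncomputable def frobNorm {m n : Type*} [Fintype m] [Fintype n]
    (A : Matrix m n ℝ) : ℝ :=
  Real.sqrt (frobNormSq A)

section Frobenius

variable {m n p : Type*} [Fintype m] [Fintype n] [Fintype p]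

lemma frobNormSq_nonneg (A : Matrix m n ℝ) : 0 ≤ frobNormSq A := by
  unfold frobNormSq; positivity

lemma sq_frobNorm (A : Matrix m n ℝ) : frobNorm A ^ 2 = frobNormSq A :=
  Real.sq_sqrt (frobNormSq_nonneg A)

lemma sum_mul_le_frobNorm_mul_frobNorm (A B : Matrix m n ℝ) :
    ∑ k, ∑ l, A k l * B k l ≤ frobNorm A * frobNorm B := by
  simpa only [frobNorm, frobNormSq, Fintype.sum_prod_type] using
    Real.sum_mul_le_sqrt_mul_sqrt Finset.univ (fun q : m × n => A q.1 q.2) (fun q => B q.1 q.2)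

attribute [local instance] Matrix.frobeniusNormedAddCommGroup

lemma frobNorm_eq_norm (A : Matrix m n ℝ) : frobNorm A = ‖A‖ := by
  simp [frobNorm, frobNormSq, frobenius_norm_def, Real.sqrt_eq_rpow]

lemma frobNorm_add_le (A B : Matrix m n ℝ) : frobNorm (A + B) ≤ frobNorm A + frobNorm B := by
  simpa only [frobNorm_eq_norm] using norm_add_le A B

lemma frobNorm_transpose_mul_self_le (A : Matrix p n ℝ) : frobNorm (Aᵀ * A) ≤ frobNormSq A := by
  rw [← sq_frobNorm, frobNorm_eq_norm, frobNorm_eq_norm]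
  calc ‖Aᵀ * A‖ ≤ ‖Aᵀ‖ * ‖A‖ := frobenius_norm_mul Aᵀ A
    _ = ‖A‖ ^ 2 := by rw [frobenius_norm_transpose, sq]

end Frobenius

lemma transpose_mul_self_eq_add {R p n : Type*} [CommRing R] [Fintype p] (A B : Matrix p n R) :
    Bᵀ * B = Aᵀ * A + ((B - A)ᵀ * A + Aᵀ * (B - A)) + (B - A)ᵀ * (B - A) := by
  simp only [transpose_sub, Matrix.sub_mul, Matrix.mul_sub]
  abel

lemma le_add_sum_range_of_succ_le {a b : ℕ → ℝ} {N : ℕ} (h : ∀ n < N, a (n + 1) ≤ a n + b n) :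
    a N ≤ a 0 + ∑ n ∈ Finset.range N, b n := by
  have hsum : ∑ n ∈ Finset.range N, (a (n + 1) - a n) ≤ ∑ n ∈ Finset.range N, b n :=
    Finset.sum_le_sum fun n hn => by linarith [h n (Finset.mem_range.1 hn)]
  linarith [Finset.sum_range_sub a N]

section Integral

variable {Ω : Type*} [MeasurableSpace Ω] {μ : Measure Ω} {m n p : Type*}

/-- The paper's `∫_T F dμ` is `entrywiseIntegral F (μ.restrict T)`. -/
noncomputable def entrywiseIntegral (F : Ω → Matrix m n ℝ) (μ : Measure Ω) : Matrix m n ℝ :=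
  Matrix.of fun k l => ∫ x, F x k l ∂μ

lemma entrywiseIntegral_add {F F' : Ω → Matrix m n ℝ}
    (hF : ∀ k l, Integrable (fun x => F x k l) μ) (hF' : ∀ k l, Integrable (fun x => F' x k l) μ) :
    entrywiseIntegral (fun x => F x + F' x) μ = entrywiseIntegral F μ + entrywiseIntegral F' μ := by
  ext k l
  exact integral_add (hF k l) (hF' k l)

lemma integrable_transpose_mul_apply [Fintype p] {A : Ω → Matrix p m ℝ} {B : Ω → Matrix p n ℝ}
    (hA : ∀ j k, MemLp (fun x => A x j k) 2 μ) (hB : ∀ j l, MemLp (fun x => B x j l) 2 μ)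
    (k : m) (l : n) : Integrable (fun x => ((A x)ᵀ * B x) k l) μ := by
  simp only [mul_apply, transpose_apply]
  exact integrable_finsetSum _ fun j _ => (hA j k).integrable_mul (hB j l)

lemma integrable_frobNormSq [Fintype m] [Fintype n] {A : Ω → Matrix m n ℝ}
    (hA : ∀ k l, MemLp (fun x => A x k l) 2 μ) :
    Integrable (fun x => frobNormSq (A x)) μ :=
  integrable_finsetSum _ fun k _ => integrable_finsetSum _ fun l _ => (hA k l).integrable_sq

/-- Minkowski's inequality, proved by pairing `∫ F` with itself: `‖∫ F‖² = ∫ ⟨∫ F, F⟩`. -/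
lemma frobNorm_entrywiseIntegral_le [Fintype m] [Fintype n] {F : Ω → Matrix m n ℝ} {h : Ω → ℝ}
    (hF : ∀ k l, Integrable (fun x => F x k l) μ) (hh : Integrable h μ)
    (hFh : ∀ x, frobNorm (F x) ≤ h x) :
    frobNorm (entrywiseIntegral F μ) ≤ ∫ x, h x ∂μ := by
  set C := entrywiseIntegral F μ
  have hC : 0 ≤ frobNorm C := Real.sqrt_nonneg _
  have hI : 0 ≤ ∫ x, h x ∂μ := integral_nonneg fun x => (Real.sqrt_nonneg _).trans (hFh x)
  have hpair : Integrable (fun x => ∑ k, ∑ l, C k l * F x k l) μ :=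
    integrable_finsetSum _ fun k _ => integrable_finsetSum _ fun l _ => (hF k l).const_mul _
  have hsq : frobNorm C ^ 2 ≤ frobNorm C * ∫ x, h x ∂μ :=
    calc frobNorm C ^ 2 = ∑ k, ∑ l, ∫ x, C k l * F x k l ∂μ := by
          rw [sq_frobNorm]
          simp only [frobNormSq, sq, integral_const_mul]
          rfl
      _ = ∫ x, ∑ k, ∑ l, C k l * F x k l ∂μ := by
          rw [integral_finsetSum _ fun k _ => integrable_finsetSum _ fun l _ =>
            (hF k l).const_mul (C k l)]
          refine Finset.sum_congr rfl fun k _ => ?_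
          rw [integral_finsetSum _ fun l _ => (hF k l).const_mul (C k l)]
      _ ≤ ∫ x, frobNorm C * h x ∂μ := integral_mono hpair (hh.const_mul _) fun x =>
          (sum_mul_le_frobNorm_mul_frobNorm C (F x)).trans (mul_le_mul_of_nonneg_left (hFh x) hC)
      _ = frobNorm C * ∫ x, h x ∂μ := integral_const_mul _ _
  nlinarith

lemma sum_setIntegral_of_partition {E ι : Type*} [NormedAddCommGroup E] [NormedSpace ℝ E]
    [Fintype ι] {T : ι → Set Ω} (hTmeas : ∀ i, MeasurableSet (T i))
    (hTdisj : Pairwise (Function.onFun Disjoint T)) (hTcover : (⋃ i, T i) = Set.univ)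
    {f : Ω → E} (hf : Integrable f μ) :
    ∑ i, ∫ x in T i, f x ∂μ = ∫ x, f x ∂μ := by
  have h := integral_iUnion hTmeas hTdisj hf.integrableOn
  rwa [hTcover, Measure.restrict_univ, tsum_fintype, eq_comm] at h

lemma frobNorm_defect_le_of_linearized_constraint [Fintype n] [Fintype p]
    {g : Ω → Matrix n n ℝ} {G₀ G₁ : Ω → Matrix p n ℝ}
    (hg : ∀ k l, Integrable (fun x => g x k l) μ)
    (hG₀ : ∀ j k, MemLp (fun x => G₀ x j k) 2 μ) (hG₁ : ∀ j k, MemLp (fun x => G₁ x j k) 2 μ)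
    (hconstraint : entrywiseIntegral
      (fun x => (G₁ x - G₀ x)ᵀ * G₀ x + (G₀ x)ᵀ * (G₁ x - G₀ x)) μ = 0) :
    frobNorm (entrywiseIntegral (fun x => (G₁ x)ᵀ * G₁ x - g x) μ) ≤
      frobNorm (entrywiseIntegral (fun x => (G₀ x)ᵀ * G₀ x - g x) μ) +
        ∫ x, frobNormSq (G₁ x - G₀ x) ∂μ := by
  have hδ : ∀ j k, MemLp (fun x => (G₁ x - G₀ x) j k) 2 μ := fun j k => (hG₁ j k).sub (hG₀ j k)
  have hdefect : ∀ k l, Integrable (fun x => ((G₀ x)ᵀ * G₀ x - g x) k l) μ := fun k l =>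
    (integrable_transpose_mul_apply hG₀ hG₀ k l).sub (hg k l)
  have hcross : ∀ k l, Integrable
      (fun x => ((G₁ x - G₀ x)ᵀ * G₀ x + (G₀ x)ᵀ * (G₁ x - G₀ x)) k l) μ := fun k l =>
    (integrable_transpose_mul_apply hδ hG₀ k l).add (integrable_transpose_mul_apply hG₀ hδ k l)
  have hsplit : entrywiseIntegral (fun x => (G₁ x)ᵀ * G₁ x - g x) μ =
      entrywiseIntegral (fun x => (G₀ x)ᵀ * G₀ x - g x) μ +
        entrywiseIntegral (fun x => (G₁ x - G₀ x)ᵀ * (G₁ x - G₀ x)) μ := by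
    have hpoint : ∀ x, (G₁ x)ᵀ * G₁ x - g x = ((G₀ x)ᵀ * G₀ x - g x) +
        ((G₁ x - G₀ x)ᵀ * G₀ x + (G₀ x)ᵀ * (G₁ x - G₀ x)) + (G₁ x - G₀ x)ᵀ * (G₁ x - G₀ x) :=
      fun x => by rw [transpose_mul_self_eq_add (G₀ x) (G₁ x)]; abel
    simp only [hpoint]
    rw [entrywiseIntegral_add (fun k l => ?_) (integrable_transpose_mul_apply hδ hδ),
      entrywiseIntegral_add hdefect hcross, hconstraint, add_zero]
    exact (hdefect k l).add (hcross k l)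
  rw [hsplit]
  exact (frobNorm_add_le _ _).trans <| add_le_add_right (frobNorm_entrywiseIntegral_le
    (integrable_transpose_mul_apply hδ hδ) (integrable_frobNormSq hδ)
    fun x => frobNorm_transpose_mul_self_le _) _

end Integral

theorem stmt_4_general {Ω : Type*} [MeasurableSpace Ω] (μ : Measure Ω)
    {ι : Type*} [Fintype ι] (T : ι → Set Ω)
    (hTmeas : ∀ i, MeasurableSet (T i))
    (hTdisj : Pairwise (Function.onFun Disjoint T))
    (hTcover : (⋃ i, T i) = Set.univ)
    (g : Ω → Matrix (Fin 2) (Fin 2) ℝ)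
    (hgint : ∀ i j, Integrable (fun x => g x i j) μ)
    (N : ℕ)
    (G : ℕ → Ω → Matrix (Fin 3) (Fin 2) ℝ)
    (hGmeas : ∀ n, n ≤ N → ∀ i j, Measurable fun x => G n x i j)
    (hGsq : ∀ n, n ≤ N → ∀ i j, Integrable (fun x => (G n x i j) ^ 2) μ)
    (hconstraint : ∀ n < N, ∀ i,
      (Matrix.of (fun k l => ∫ x in T i,
        ((G (n + 1) x - G n x)ᵀ * G n x + (G n x)ᵀ * (G (n + 1) x - G n x)) k l ∂μ))
        = (0 : Matrix (Fin 2) (Fin 2) ℝ)) :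
    ∑ i, frobNorm (Matrix.of (fun k l => ∫ x in T i, ((G N x)ᵀ * G N x - g x) k l ∂μ)) ≤
      ∑ i, frobNorm (Matrix.of (fun k l => ∫ x in T i, ((G 0 x)ᵀ * G 0 x - g x) k l ∂μ)) +
        ∑ n ∈ Finset.range N, ∫ x, frobNormSq (G (n + 1) x - G n x) ∂μ := by
  have hL2 : ∀ n ≤ N, ∀ j k, MemLp (fun x => G n x j k) 2 μ := fun n hn j k =>
    (memLp_two_iff_integrable_sq (hGmeas n hn j k).aestronglyMeasurable).2 (hGsq n hn j k)
  refine le_add_sum_range_of_succ_le (a := fun n => ∑ i, frobNorm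
    (entrywiseIntegral (fun x => (G n x)ᵀ * G n x - g x) (μ.restrict (T i)))) fun n hn => ?_
  have hδ : ∀ j k, MemLp (fun x => (G (n + 1) x - G n x) j k) 2 μ := fun j k =>
    (hL2 (n + 1) hn j k).sub (hL2 n hn.le j k)
  rw [← sum_setIntegral_of_partition hTmeas hTdisj hTcover (integrable_frobNormSq hδ),
    ← Finset.sum_add_distrib]
  exact Finset.sum_le_sum fun i _ => frobNorm_defect_le_of_linearized_constraint
    (fun k l => (hgint k l).restrict) (fun j k => (hL2 n hn.le j k).restrict _)
    (fun j k => (hL2 (n + 1) hn j k).restrict _) (hconstraint n hn i)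

/-- Core of Proposition 5.2 (control of metric defect): if consecutive gradient fields
`G n` satisfy the linearized metric constraint elementwise over a finite measurable
partition `T` of `Ω`, the metric defect of `G N` is controlled by the initial defect
plus the accumulated squared increments. -/
theorem stmt_4 {Ω : Type*} [MeasurableSpace Ω] (μ : Measure Ω)
    {ι : Type*} [Fintype ι] (T : ι → Set Ω)
    (hTmeas : ∀ i, MeasurableSet (T i))
    (hTdisj : Pairwise (Function.onFun Disjoint T))
    (hTcover : (⋃ i, T i) = Set.univ)
    (g : Ω → Matrix (Fin 2) (Fin 2) ℝ)
    (hgmeas : ∀ i j, Measurable fun x => g x i j)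
    (hgint : ∀ i j, Integrable (fun x => g x i j) μ)
    (N : ℕ) (hN : 1 ≤ N)
    (G : ℕ → Ω → Matrix (Fin 3) (Fin 2) ℝ)
    (hGmeas : ∀ n, n ≤ N → ∀ i j, Measurable fun x => G n x i j)
    (hGsq : ∀ n, n ≤ N → ∀ i j, Integrable (fun x => (G n x i j) ^ 2) μ)
    (hconstraint : ∀ n < N, ∀ i,
      (Matrix.of (fun k l => ∫ x in T i,
        ((G (n + 1) x - G n x)ᵀ * G n x + (G n x)ᵀ * (G (n + 1) x - G n x)) k l ∂μ))
        = (0 : Matrix (Fin 2) (Fin 2) ℝ)) :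
    ∑ i, frobNorm (Matrix.of (fun k l => ∫ x in T i, ((G N x)ᵀ * G N x - g x) k l ∂μ)) ≤
      ∑ i, frobNorm (Matrix.of (fun k l => ∫ x in T i, ((G 0 x)ᵀ * G 0 x - g x) k l ∂μ)) +
        ∑ n ∈ Finset.range N, ∫ x, frobNormSq (G (n + 1) x - G n x) ∂μ :=
  stmt_4_general μ T hTmeas hTdisj hTcover g hgint N G hGmeas hGsq hconstraint
end

section
/- Let Ω ⊆ ℝ² be open, x ∈ Ω, and y : Ω → ℝ³ of class C² on a neighborhood of x with ∂₁y(x) and ∂₂y(x) linearly independent. Define ν := (∂₁y(x) × ∂₂y(x)) / ‖∂₁y(x) × ∂₂y(x)‖ ∈ ℝ³, II ∈ ℝ^{2×2} with II_{ij} := ⟨∂_i∂_j y(x), ν⟩, and D²y_k ∈ ℝ^{2×2} the Hessian of the k-th component of y at x (k = 1, 2, 3). Then for every matrix a ∈ ℝ^{2×2}: (tr(a · II · a))² ≤ Σ_{k=1}^{3} (tr(a · D²y_k · a))², where tr denotes the matrix trace. -/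
open Matrix

/-- First partial derivative `∂ᵢ y (x)` of a map `y : ℝ² → ℝ³`. -/
noncomputable def pd (y : (Fin 2 → ℝ) → (Fin 3 → ℝ)) (i : Fin 2) (x : Fin 2 → ℝ) :
    Fin 3 → ℝ :=
  fderiv ℝ y x (Pi.single i 1)

/-- Second partial derivative `∂ᵢ∂ⱼ y (x)` of a map `y : ℝ² → ℝ³`. -/
noncomputable def pd2 (y : (Fin 2 → ℝ) → (Fin 3 → ℝ)) (i j : Fin 2) (x : Fin 2 → ℝ) :
    Fin 3 → ℝ :=
  fderiv ℝ (fun z => fderiv ℝ y z (Pi.single j 1)) x (Pi.single i 1)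

/-- Second partial derivative `∂ᵢ∂ⱼ y_k (x)` of the `k`-th component of `y : ℝ² → ℝ³`. -/
noncomputable def pd2c (y : (Fin 2 → ℝ) → (Fin 3 → ℝ)) (k : Fin 3) (i j : Fin 2)
    (x : Fin 2 → ℝ) : ℝ :=
  fderiv ℝ (fun z => fderiv ℝ (fun w => y w k) z (Pi.single j 1)) x (Pi.single i 1)

/-! Since the second partial derivatives of `y` are the vectors of the componentwise Hessians,
`II = Σₖ νₖ D²yₖ`, so `tr(a II a) = Σₖ νₖ tr(a D²yₖ a)`; as `‖ν‖ ≤ 1`, the Cauchy–Schwarz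
inequality gives the bound. -/

lemma fderiv_apply_apply {𝕜 E F ι : Type*} [NontriviallyNormedField 𝕜] [Fintype ι]
    [NormedAddCommGroup E] [NormedSpace 𝕜 E] [NormedAddCommGroup F] [NormedSpace 𝕜 F]
    {f : E → ι → F} {z : E} (hf : DifferentiableAt 𝕜 f z) (k : ι) (v : E) :
    fderiv 𝕜 (fun w => f w k) z v = fderiv 𝕜 f z v k := by
  rw [fderiv_apply hf]
  rfl

lemma pd2_apply_eq_pd2c {y : (Fin 2 → ℝ) → (Fin 3 → ℝ)} {x : Fin 2 → ℝ}
    (hy : ContDiffAt ℝ 2 y x) (k : Fin 3) (i j : Fin 2) : pd2 y i j x k = pd2c y k i j x := by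
  have hdiff : ∀ᶠ z in nhds x, DifferentiableAt ℝ y z :=
    (hy.eventually (by simp)).mono fun z hz => hz.differentiableAt (by norm_num)
  have hcomp : (fun z => fderiv ℝ (fun w => y w k) z (Pi.single j 1)) =ᶠ[nhds x]
      fun z => fderiv ℝ y z (Pi.single j 1) k :=
    hdiff.mono fun z hz => fderiv_apply_apply hz k _
  have hd2 : DifferentiableAt ℝ (fun z => fderiv ℝ y z (Pi.single j 1)) x :=
    ((hy.fderiv_right le_rfl).differentiableAt one_ne_zero).clm_apply
      (differentiableAt_const _)
  rw [pd2c, hcomp.fderiv_eq, fderiv_apply_apply hd2, pd2]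

lemma sum_sq_inv_sqrt_smul_le_one {ι : Type*} [Fintype ι] (w : ι → ℝ) :
    ∑ k, ((Real.sqrt (∑ k, w k ^ 2))⁻¹ • w) k ^ 2 ≤ 1 := by
  have hS : 0 ≤ ∑ k, w k ^ 2 := Finset.sum_nonneg fun _ _ => sq_nonneg _
  simp only [Pi.smul_apply, smul_eq_mul, mul_pow, ← Finset.mul_sum, inv_pow, Real.sq_sqrt hS]
  exact inv_mul_le_one_of_le₀ le_rfl hS

lemma sq_sum_mul_le_sum_sq {ι : Type*} (s : Finset ι) {c : ι → ℝ}
    (hc : ∑ k ∈ s, c k ^ 2 ≤ 1) (t : ι → ℝ) :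
    (∑ k ∈ s, c k * t k) ^ 2 ≤ ∑ k ∈ s, t k ^ 2 :=
  calc (∑ k ∈ s, c k * t k) ^ 2 ≤ (∑ k ∈ s, c k ^ 2) * ∑ k ∈ s, t k ^ 2 :=
        Finset.sum_mul_sq_le_sq_mul_sq s c t
    _ ≤ ∑ k ∈ s, t k ^ 2 :=
        mul_le_of_le_one_left (Finset.sum_nonneg fun _ _ => sq_nonneg _) hc

lemma trace_mul_sum_smul_mul {n ι R : Type*} [Fintype n] [CommSemiring R] (s : Finset ι)
    (a : Matrix n n R) (c : ι → R) (D : ι → Matrix n n R) :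
    trace (a * (∑ k ∈ s, c k • D k) * a) = ∑ k ∈ s, c k * trace (a * D k * a) := by
  simp only [Matrix.mul_sum, Matrix.sum_mul, Matrix.mul_smul, Matrix.smul_mul, trace_sum,
    trace_smul, smul_eq_mul]

theorem stmt_13_general (Ω : Set (Fin 2 → ℝ)) (x : Fin 2 → ℝ)
    (y : (Fin 2 → ℝ) → (Fin 3 → ℝ))
    (hy : ∃ U, U ⊆ Ω ∧ U ∈ nhds x ∧ ContDiffOn ℝ 2 y U)
    (ν : Fin 3 → ℝ)
    (hν : ν = (Real.sqrt (∑ k, (crossProduct (pd y 0 x) (pd y 1 x)) k ^ 2))⁻¹ •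
      crossProduct (pd y 0 x) (pd y 1 x))
    (II : Matrix (Fin 2) (Fin 2) ℝ)
    (hII : ∀ i j, II i j = ∑ k, pd2 y i j x k * ν k)
    (D2 : Fin 3 → Matrix (Fin 2) (Fin 2) ℝ)
    (hD2 : ∀ k i j, D2 k i j = pd2c y k i j x)
    (a : Matrix (Fin 2) (Fin 2) ℝ) :
    (Matrix.trace (a * II * a)) ^ 2 ≤ ∑ k, (Matrix.trace (a * D2 k * a)) ^ 2 := by
  obtain ⟨U, -, hU, hC2⟩ := hy
  have hyx : ContDiffAt ℝ 2 y x := hC2.contDiffAt hU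
  have hII_eq : II = ∑ k, ν k • D2 k := by
    ext i j
    simp only [hII, hD2, Matrix.sum_apply, Matrix.smul_apply, smul_eq_mul,
      pd2_apply_eq_pd2c hyx, mul_comm]
  rw [hII_eq, trace_mul_sum_smul_mul]
  exact sq_sum_mul_le_sum_sq _ (hν ▸ sum_sq_inv_sqrt_smul_le_one _) _

/-- Pointwise content of Proposition A.1, part (A.2): with `II` the second fundamental
form and `D²y_k` the Hessians of the components of a C² immersion `y` at `x`, one has
`(tr(a II a))² ≤ Σ_k (tr(a D²y_k a))²` for every `2 × 2` matrix `a`. -/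
theorem stmt_13 (Ω : Set (Fin 2 → ℝ)) (hΩ : IsOpen Ω) (x : Fin 2 → ℝ) (hx : x ∈ Ω)
    (y : (Fin 2 → ℝ) → (Fin 3 → ℝ))
    (hy : ∃ U, U ⊆ Ω ∧ U ∈ nhds x ∧ ContDiffOn ℝ 2 y U)
    (hli : LinearIndependent ℝ ![pd y 0 x, pd y 1 x])
    (ν : Fin 3 → ℝ)
    (hν : ν = (Real.sqrt (∑ k, (crossProduct (pd y 0 x) (pd y 1 x)) k ^ 2))⁻¹ •
      crossProduct (pd y 0 x) (pd y 1 x))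
    (II : Matrix (Fin 2) (Fin 2) ℝ)
    (hII : ∀ i j, II i j = ∑ k, pd2 y i j x k * ν k)
    (D2 : Fin 3 → Matrix (Fin 2) (Fin 2) ℝ)
    (hD2 : ∀ k i j, D2 k i j = pd2c y k i j x)
    (a : Matrix (Fin 2) (Fin 2) ℝ) :
    (Matrix.trace (a * II * a)) ^ 2 ≤ ∑ k, (Matrix.trace (a * D2 k * a)) ^ 2 :=
  stmt_13_general Ω x y hy ν hν II hII D2 hD2 a
end

section
/- Let H and K be real inner product spaces, B : H × H → K a symmetric bilinear map with ‖B(v,w)‖_K ≤ C_B·‖v‖_H·‖w‖_H for all v, w ∈ H and some C_B > 0. Fix g ∈ K, define E(z) := (1/2)·‖B(z,z) − g‖_K² and a(z; v, w) := 2·⟨B(v,w), B(z,z) − g⟩_K. Let z ∈ H with ‖z‖_H ≤ R for some R > 0. Then there exists τ₀ > 0, depending only on C_B, R and E(z), such that for every τ with 0 < τ ≤ τ₀ and every δ ∈ H satisfying τ⁻¹·⟨δ, v⟩_H + a(z; z + δ, v) = 0 for all v ∈ H, one has E(z + δ) + (2τ)⁻¹·‖δ‖_H² ≤ E(z). -/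
open scoped RealInnerProductSpace

set_option maxHeartbeats 1000000

/-- Abstract content of Proposition 6.2 (energy decay for the prestrain preprocessing
gradient flow): if `‖z‖ ≤ R`, there is a pseudo time-step threshold `τ₀ > 0` (depending
only on `C_B`, `R` and `E(z)`) such that for any `0 < τ ≤ τ₀`, the solution `δ` of the
linearized gradient-flow step satisfies `E(z + δ) + (2τ)⁻¹ ‖δ‖² ≤ E(z)`. -/
theorem stmt_16 {H K : Type*} [NormedAddCommGroup H] [InnerProductSpace ℝ H]
    [NormedAddCommGroup K] [InnerProductSpace ℝ K]
    (B : H →ₗ[ℝ] H →ₗ[ℝ] K) (hBsymm : ∀ v w : H, B v w = B w v)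
    (CB : ℝ) (hCB : 0 < CB) (hBbd : ∀ v w : H, ‖B v w‖ ≤ CB * ‖v‖ * ‖w‖)
    (g : K)
    (E : H → ℝ) (hE : ∀ z, E z = (1 / 2) * ‖B z z - g‖ ^ 2)
    (a : H → H → H → ℝ) (ha : ∀ z v w, a z v w = 2 * ⟪B v w, B z z - g⟫)
    (z : H) (R : ℝ) (hR : 0 < R) (hz : ‖z‖ ≤ R) :
    ∃ τ₀ > 0, ∀ τ : ℝ, 0 < τ → τ ≤ τ₀ →
      ∀ δ : H, (∀ v : H, τ⁻¹ * ⟪δ, v⟫ + a z (z + δ) v = 0) →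
        E (z + δ) + (2 * τ)⁻¹ * ‖δ‖ ^ 2 ≤ E z := by
  classical
  set G : K := B z z - g with hGdef
  set n : ℝ := ‖G‖ with hndef
  have hn : 0 ≤ n := norm_nonneg _
  have hA1 : (0:ℝ) < 4 * CB * (n + 1) := by nlinarith
  have hA2 : (0:ℝ) < 9 * CB ^ 2 * R ^ 2 + 2 * n * CB + 1 := by nlinarith [sq_nonneg CB, sq_nonneg R, mul_nonneg hn hCB.le]
  refine ⟨min (1 / (4 * CB * (n + 1))) (1 / (9 * CB ^ 2 * R ^ 2 + 2 * n * CB + 1)),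
    lt_min (by positivity) (by positivity), ?_⟩
  intro τ hτ hττ δ hδ
  have hτ1 : τ * (4 * CB * (n + 1)) ≤ 1 := by
    have h := le_trans hττ (min_le_left _ _)
    rw [le_div_iff₀ hA1] at h; linarith
  have hτ2 : τ * (9 * CB ^ 2 * R ^ 2 + 2 * n * CB + 1) ≤ 1 := by
    have h := le_trans hττ (min_le_right _ _)
    rw [le_div_iff₀ hA2] at h; linarith
  set d : ℝ := ‖δ‖ with hd
  have hd0 : 0 ≤ d := norm_nonneg _
  -- key equation from testing with v = δ
  have hkey : τ⁻¹ * d ^ 2 + 2 * (⟪G, B z δ⟫ + ⟪G, B δ δ⟫) = 0 := by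
    have h := hδ δ
    rw [ha] at h
    have hBl : B (z + δ) δ = B z δ + B δ δ := by
      rw [map_add]; rfl
    rw [hBl, real_inner_self_eq_norm_sq, ← hGdef, inner_add_left, ← hd] at h
    have c1 := real_inner_comm G (B z δ)
    have c2 := real_inner_comm G (B δ δ)
    linarith
  -- basic bounds
  have hBzδ : ‖B z δ‖ ≤ CB * R * d := by
    have h := hBbd z δ
    have : CB * ‖z‖ * ‖δ‖ ≤ CB * R * d := by
      rw [← hd]
      nlinarith [mul_le_mul_of_nonneg_right (mul_le_mul_of_nonneg_left hz hCB.le) hd0]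
    linarith
  have hBδδ : ‖B δ δ‖ ≤ CB * d ^ 2 := by
    have h := hBbd δ δ
    rw [← hd] at h
    nlinarith
  -- a priori bound on d
  have h1 : τ⁻¹ * d ^ 2 ≤ 2 * ((CB * R * d + CB * d ^ 2) * n) := by
    have habs1 : |⟪G, B z δ⟫| ≤ n * (CB * R * d) := by
      calc |⟪G, B z δ⟫| ≤ ‖G‖ * ‖B z δ‖ := abs_real_inner_le_norm _ _
      _ ≤ n * (CB * R * d) := by rw [← hndef]; exact mul_le_mul_of_nonneg_left hBzδ hn
    have habs2 : |⟪G, B δ δ⟫| ≤ n * (CB * d ^ 2) := by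
      calc |⟪G, B δ δ⟫| ≤ ‖G‖ * ‖B δ δ‖ := abs_real_inner_le_norm _ _
      _ ≤ n * (CB * d ^ 2) := by rw [← hndef]; exact mul_le_mul_of_nonneg_left hBδδ hn
    have hn1 := neg_abs_le ⟪G, B z δ⟫
    have hn2 := neg_abs_le ⟪G, B δ δ⟫
    nlinarith [hkey]
  have h1' : d ^ 2 ≤ τ * (2 * ((CB * R * d + CB * d ^ 2) * n)) := by
    have hc : τ * (τ⁻¹ * d ^ 2) = d ^ 2 := by
      field_simp
    calc d ^ 2 = τ * (τ⁻¹ * d ^ 2) := hc.symm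
    _ ≤ _ := mul_le_mul_of_nonneg_left h1 hτ.le
  have h2cn : 2 * τ * n * CB ≤ 1 / 2 := by
    nlinarith [mul_nonneg hτ.le hCB.le]
  have hsq : d ^ 2 ≤ R * d := by
    nlinarith [mul_le_mul_of_nonneg_right h2cn (mul_nonneg hR.le hd0),
      mul_le_mul_of_nonneg_right h2cn (sq_nonneg d)]
  have hdR : d ≤ R := by nlinarith
  -- energy expansion
  set P : K := (2:ℝ) • B z δ + B δ δ with hP
  have hBexp : B (z + δ) (z + δ) - g = G + P := by
    have hs : B δ z = B z δ := hBsymm δ z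
    have hexp : B (z + δ) (z + δ) = B z z + B z δ + (B δ z + B δ δ) := by
      have h2 : B (z + δ) = B z + B δ := map_add B z δ
      rw [h2, LinearMap.add_apply, map_add, map_add]
    rw [hexp, hs, hGdef, hP, two_smul]; abel
  have hPnorm : ‖P‖ ≤ 3 * CB * R * d := by
    have h2 : ‖P‖ ≤ 2 * ‖B z δ‖ + ‖B δ δ‖ := by
      calc ‖P‖ ≤ ‖(2:ℝ) • B z δ‖ + ‖B δ δ‖ := norm_add_le _ _
      _ = 2 * ‖B z δ‖ + ‖B δ δ‖ := by rw [norm_smul]; simp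
    have h3 : CB * d ^ 2 ≤ CB * R * d := by nlinarith
    linarith
  have hEexp : E (z + δ) = E z + ⟪G, P⟫ + (1 / 2) * ‖P‖ ^ 2 := by
    rw [hE, hE, hBexp, ← hGdef, norm_add_sq_real]; ring
  have hGP : ⟪G, P⟫ = -(τ⁻¹ * d ^ 2) - ⟪G, B δ δ⟫ := by
    have h4 : ⟪G, P⟫ = 2 * ⟪G, B z δ⟫ + ⟪G, B δ δ⟫ := by
      rw [hP, inner_add_right, real_inner_smul_right]
    linarith [hkey]
  have hGB : -⟪G, B δ δ⟫ ≤ n * (CB * d ^ 2) := by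
    have h5 : |⟪G, B δ δ⟫| ≤ n * (CB * d ^ 2) := by
      calc |⟪G, B δ δ⟫| ≤ ‖G‖ * ‖B δ δ‖ := abs_real_inner_le_norm _ _
      _ ≤ n * (CB * d ^ 2) := by rw [← hndef]; exact mul_le_mul_of_nonneg_left hBδδ hn
    linarith [neg_abs_le ⟪G, B δ δ⟫]
  -- coefficient bound
  have hcoef : 9 / 2 * CB ^ 2 * R ^ 2 + n * CB ≤ (2 * τ)⁻¹ := by
    rw [inv_eq_one_div, le_div_iff₀ (by positivity : (0:ℝ) < 2 * τ)]
    nlinarith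
  have hPsq : ‖P‖ ^ 2 ≤ 9 * CB ^ 2 * R ^ 2 * d ^ 2 := by
    nlinarith [norm_nonneg P]
  have hcd : (9 / 2 * CB ^ 2 * R ^ 2 + n * CB) * d ^ 2 ≤ (2 * τ)⁻¹ * d ^ 2 :=
    mul_le_mul_of_nonneg_right hcoef (sq_nonneg d)
  have hncd : n * (CB * d ^ 2) = n * CB * d ^ 2 := by ring
  have hhalf : τ⁻¹ * d ^ 2 = 2 * ((2 * τ)⁻¹ * d ^ 2) := by
    rw [mul_inv]; ring
  nlinarith [hEexp, hGP, hGB, hPsq, hcd]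
end
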